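/- arXiv:1410.5209 — 2 statements merged into one kernel-verified Lean document; each statement's English description precedes it below -/
import Mathlib

section
/- Fix a mode n, a row index i_n, and λ > 0. Then the matrix B + λI_C is invertible, and the function that maps a vector v = (v_1,…,v_C) ∈ ℝ^C to the value of the regularized loss L obtained by setting a^{(n)}_{i_n k_c} = v_c for c = 1,…,C (all other entries of all factor matrices held fixed) attains its unique global minimum at v* = (B + λI_C)^{-1} c, where I_C is the C×C identity matrix. (Paper's Theorem 1, the SALS row-update rule.) -/
open Finset Matrix

/-- The regularized tensor-factorization loss
`L = ∑_{i∈Ω} (x_i − ∑_k ∏_n a^{(n)}_{i_n k})² + λ ∑_n ∑_{i_n,k} (a^{(n)}_{i_n k})²`. -/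
noncomputable def loss {N K : ℕ} (I : Fin N → ℕ)
    (Ω : Finset ((m : Fin N) → Fin (I m)))
    (x : ((m : Fin N) → Fin (I m)) → ℝ) (lam : ℝ)
    (A : (m : Fin N) → Fin (I m) → Fin K → ℝ) : ℝ :=
  (∑ i ∈ Ω, (x i - ∑ k : Fin K, ∏ m : Fin N, A m (i m) k) ^ 2)
    + lam * ∑ m : Fin N, ∑ j : Fin (I m), ∑ k : Fin K, A m j k ^ 2

/-- Replace the entries `a^{(n)}_{i_n k_c}` by `v c` (for `c = 1,…,C`), leaving all
other entries of all factor matrices fixed. -/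
noncomputable def updRow {N K C : ℕ} {I : Fin N → ℕ}
    (A : (m : Fin N) → Fin (I m) → Fin K → ℝ)
    (n : Fin N) (iN : Fin (I n)) (ks : Fin C → Fin K) (v : Fin C → ℝ) :
    (m : Fin N) → Fin (I m) → Fin K → ℝ :=
  fun l j k' =>
    if (⟨l, j⟩ : Σ m, Fin (I m)) = ⟨n, iN⟩ then
      if h : ∃ c, ks c = k' then v h.choose else A l j k'
    else A l j k'

/-- `r̂_i = x_i − ∑_{k ∉ {k_1,…,k_C}} ∏_l a^{(l)}_{i_l k}`. -/
noncomputable def rhat {N K C : ℕ} {I : Fin N → ℕ}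
    (x : ((m : Fin N) → Fin (I m)) → ℝ)
    (A : (m : Fin N) → Fin (I m) → Fin K → ℝ)
    (ks : Fin C → Fin K) : ((m : Fin N) → Fin (I m)) → ℝ :=
  fun i => x i - ∑ k ∈ Finset.univ.filter (fun k => ∀ c, ks c ≠ k),
    ∏ m : Fin N, A m (i m) k

/-- `B_{c₁c₂} = ∑_{i∈Ω^{(n)}_{i_n}} (∏_{l≠n} a^{(l)}_{i_l k_{c₁}})(∏_{l≠n} a^{(l)}_{i_l k_{c₂}})`. -/
noncomputable def Bmat {N K C : ℕ} {I : Fin N → ℕ}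
    (Ω : Finset ((m : Fin N) → Fin (I m)))
    (A : (m : Fin N) → Fin (I m) → Fin K → ℝ)
    (n : Fin N) (iN : Fin (I n)) (ks : Fin C → Fin K) :
    Matrix (Fin C) (Fin C) ℝ :=
  Matrix.of fun c₁ c₂ =>
    ∑ i ∈ Ω.filter (fun i => i n = iN),
      (∏ l ∈ Finset.univ.erase n, A l (i l) (ks c₁)) *
        (∏ l ∈ Finset.univ.erase n, A l (i l) (ks c₂))

/-- `c_c = ∑_{i∈Ω^{(n)}_{i_n}} r̂_i ∏_{l≠n} a^{(l)}_{i_l k_c}`. -/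
noncomputable def cvec {N K C : ℕ} {I : Fin N → ℕ}
    (Ω : Finset ((m : Fin N) → Fin (I m)))
    (x : ((m : Fin N) → Fin (I m)) → ℝ)
    (A : (m : Fin N) → Fin (I m) → Fin K → ℝ)
    (n : Fin N) (iN : Fin (I n)) (ks : Fin C → Fin K) : Fin C → ℝ :=
  fun c => ∑ i ∈ Ω.filter (fun i => i n = iN),
    rhat x A ks i * ∏ l ∈ Finset.univ.erase n, A l (i l) (ks c)

section Aux
variable {N K C : ℕ} {I : Fin N → ℕ}
  (A : (m : Fin N) → Fin (I m) → Fin K → ℝ)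
  (n : Fin N) (iN : Fin (I n)) (ks : Fin C → Fin K)

lemma updRow_ne (v : Fin C → ℝ) {l : Fin N} {j : Fin (I l)}
    (h : (⟨l, j⟩ : Σ m, Fin (I m)) ≠ ⟨n, iN⟩) (k : Fin K) :
    updRow A n iN ks v l j k = A l j k := by
  simp [updRow, h]

lemma updRow_not (v : Fin C → ℝ) {l : Fin N} {j : Fin (I l)} {k : Fin K}
    (hk : ∀ c, ks c ≠ k) :
    updRow A n iN ks v l j k = A l j k := by
  have h2 : ¬ ∃ c, ks c = k := fun ⟨c, hc⟩ => hk c hc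
  simp [updRow, h2]

lemma updRow_ks (hks : Function.Injective ks) (v : Fin C → ℝ) (c : Fin C) :
    updRow A n iN ks v n iN (ks c) = v c := by
  unfold updRow
  rw [if_pos rfl, dif_pos ⟨c, rfl⟩]
  exact congrArg v (hks (⟨c, rfl⟩ : ∃ c', ks c' = ks c).choose_spec)

lemma sum_range_ks (hks : Function.Injective ks) (f : Fin K → ℝ) :
    ∑ k ∈ Finset.univ.filter (fun k => ¬ ∀ c, ks c ≠ k), f k = ∑ c, f (ks c) := by
  have himg : Finset.univ.filter (fun k => ¬ ∀ c, ks c ≠ k)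
      = Finset.image ks Finset.univ := by
    ext k
    simp [not_forall, not_ne_iff, eq_comm]
  rw [himg, Finset.sum_image (fun a _ b _ h => hks h)]


lemma prod_upd_ks (hks : Function.Injective ks) (v : Fin C → ℝ)
    {i : (m : Fin N) → Fin (I m)} (hi : i n = iN) (c : Fin C) :
    ∏ m, updRow A n iN ks v m (i m) (ks c)
      = v c * ∏ l ∈ Finset.univ.erase n, A l (i l) (ks c) := by
  rw [← Finset.mul_prod_erase Finset.univ _ (Finset.mem_univ n)]
  congr 1
  · rw [hi]
    exact updRow_ks A n iN ks hks v c
  · exact Finset.prod_congr rfl fun l hl =>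
      updRow_ne A n iN ks v
        (fun h => (Finset.mem_erase.mp hl).1 (congrArg Sigma.fst h)) _

lemma prod_upd_not (v : Fin C → ℝ) {i : (m : Fin N) → Fin (I m)} {k : Fin K}
    (hk : ∀ c, ks c ≠ k) :
    ∏ m, updRow A n iN ks v m (i m) k = ∏ m, A m (i m) k :=
  Finset.prod_congr rfl fun m _ => updRow_not A n iN ks v hk

lemma prod_upd_offrow (v : Fin C → ℝ) {i : (m : Fin N) → Fin (I m)}
    (hi : ¬ i n = iN) (k : Fin K) :
    ∏ m, updRow A n iN ks v m (i m) k = ∏ m, A m (i m) k := by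
  refine Finset.prod_congr rfl fun m _ => updRow_ne A n iN ks v ?_ k
  intro h
  rcases Sigma.mk.inj_iff.mp h with ⟨h1, h2⟩
  subst h1
  exact hi (eq_of_heq h2)

lemma sum_pred (hks : Function.Injective ks) (v : Fin C → ℝ)
    {i : (m : Fin N) → Fin (I m)} (hi : i n = iN) :
    ∑ k, ∏ m, updRow A n iN ks v m (i m) k
      = (∑ k ∈ Finset.univ.filter (fun k => ∀ c, ks c ≠ k), ∏ m, A m (i m) k)
        + ∑ c, v c * ∏ l ∈ Finset.univ.erase n, A l (i l) (ks c) := by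
  rw [← Finset.sum_filter_add_sum_filter_not Finset.univ (fun k => ∀ c, ks c ≠ k)]
  congr 1
  · exact Finset.sum_congr rfl fun k hk =>
      prod_upd_not A n iN ks v (Finset.mem_filter.mp hk).2
  · rw [sum_range_ks ks hks]
    exact Finset.sum_congr rfl fun c _ => prod_upd_ks A n iN ks hks v hi c

lemma reg_row (hks : Function.Injective ks) (v : Fin C → ℝ) :
    ∑ k, (updRow A n iN ks v n iN k) ^ 2
      = (∑ k ∈ Finset.univ.filter (fun k => ∀ c, ks c ≠ k), A n iN k ^ 2)
        + ∑ c, v c ^ 2 := by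
  rw [← Finset.sum_filter_add_sum_filter_not Finset.univ (fun k => ∀ c, ks c ≠ k)]
  congr 1
  · exact Finset.sum_congr rfl fun k hk => by
      rw [updRow_not A n iN ks v (Finset.mem_filter.mp hk).2]
  · rw [sum_range_ks ks hks]
    exact Finset.sum_congr rfl fun c _ => by
      rw [updRow_ks A n iN ks hks v c]

lemma reg_upd (hks : Function.Injective ks) (v : Fin C → ℝ) :
    ∑ m, ∑ j, ∑ k, (updRow A n iN ks v m j k) ^ 2
      = (∑ c, v c ^ 2)
        + ∑ m, ∑ j, (if (⟨m, j⟩ : Σ m, Fin (I m)) = ⟨n, iN⟩ then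
            (∑ k ∈ Finset.univ.filter (fun k => ∀ c, ks c ≠ k), A n iN k ^ 2)
          else ∑ k, A m j k ^ 2) := by
  have hk : ∀ (m : Fin N) (j : Fin (I m)),
      ∑ k, (updRow A n iN ks v m j k) ^ 2
        = (if (⟨m, j⟩ : Σ m, Fin (I m)) = ⟨n, iN⟩ then ∑ c, v c ^ 2 else 0)
          + (if (⟨m, j⟩ : Σ m, Fin (I m)) = ⟨n, iN⟩ then
              (∑ k ∈ Finset.univ.filter (fun k => ∀ c, ks c ≠ k), A n iN k ^ 2)
            else ∑ k, A m j k ^ 2) := by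
    intro m j
    by_cases h : (⟨m, j⟩ : Σ m, Fin (I m)) = ⟨n, iN⟩
    · have hm : n = m := (congrArg Sigma.fst h).symm
      subst hm
      have hj : iN = j := (eq_of_heq (Sigma.mk.inj_iff.mp h).2).symm
      subst hj
      rw [if_pos rfl, if_pos rfl, reg_row A n iN ks hks v]
      ring
    · rw [if_neg h, if_neg h, zero_add]
      exact Finset.sum_congr rfl fun k _ => by rw [updRow_ne A n iN ks v h k]
  have hdiag : ∀ T : ℝ,
      ∑ m : Fin N, ∑ j : Fin (I m),
        (if (⟨m, j⟩ : Σ m, Fin (I m)) = ⟨n, iN⟩ then T else 0) = T := by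
    intro T
    rw [Finset.sum_eq_single n]
    · rw [Finset.sum_eq_single iN]
      · simp
      · intro j _ hj
        rw [if_neg (show ¬ (⟨n, j⟩ : Σ m, Fin (I m)) = ⟨n, iN⟩ from
          fun h => hj (eq_of_heq (Sigma.mk.inj_iff.mp h).2))]
      · simp
    · intro m _ hm
      exact Finset.sum_eq_zero fun j _ => if_neg fun h => hm (congrArg Sigma.fst h)
    · simp
  calc ∑ m, ∑ j, ∑ k, (updRow A n iN ks v m j k) ^ 2
      = ∑ m : Fin N, ∑ j : Fin (I m),
          ((if (⟨m, j⟩ : Σ m, Fin (I m)) = ⟨n, iN⟩ then ∑ c, v c ^ 2 else 0)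
            + (if (⟨m, j⟩ : Σ m, Fin (I m)) = ⟨n, iN⟩ then
                (∑ k ∈ Finset.univ.filter (fun k => ∀ c, ks c ≠ k), A n iN k ^ 2)
              else ∑ k, A m j k ^ 2)) := by
        exact Finset.sum_congr rfl fun m _ => Finset.sum_congr rfl fun j _ => hk m j
    _ = _ := by
        simp only [Finset.sum_add_distrib]
        rw [hdiag]

lemma loss_upd (hks : Function.Injective ks)
    (Ω : Finset ((m : Fin N) → Fin (I m)))
    (x : ((m : Fin N) → Fin (I m)) → ℝ) (lam : ℝ) (v : Fin C → ℝ) :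
    loss I Ω x lam (updRow A n iN ks v)
      = (∑ i ∈ Ω.filter (fun i => i n = iN),
          (rhat x A ks i
            - ∑ c, v c * ∏ l ∈ Finset.univ.erase n, A l (i l) (ks c)) ^ 2)
        + lam * ((∑ c, v c ^ 2)
            + ∑ m : Fin N, ∑ j : Fin (I m),
              (if (⟨m, j⟩ : Σ m, Fin (I m)) = ⟨n, iN⟩ then
                  (∑ k ∈ Finset.univ.filter (fun k => ∀ c, ks c ≠ k), A n iN k ^ 2)
                else ∑ k, A m j k ^ 2))
        + ∑ i ∈ Ω.filter (fun i => ¬ i n = iN),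
            (x i - ∑ k, ∏ m, A m (i m) k) ^ 2 := by
  unfold loss
  rw [← Finset.sum_filter_add_sum_filter_not Ω (fun i => i n = iN),
    reg_upd A n iN ks hks v]
  have h1 : ∑ i ∈ Ω.filter (fun i => i n = iN),
        (x i - ∑ k, ∏ m, updRow A n iN ks v m (i m) k) ^ 2
      = ∑ i ∈ Ω.filter (fun i => i n = iN),
          (rhat x A ks i
            - ∑ c, v c * ∏ l ∈ Finset.univ.erase n, A l (i l) (ks c)) ^ 2 :=
    Finset.sum_congr rfl fun i hi => by
      rw [sum_pred A n iN ks hks v (Finset.mem_filter.mp hi).2]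
      simp only [rhat]
      ring
  have h2 : ∑ i ∈ Ω.filter (fun i => ¬ i n = iN),
        (x i - ∑ k, ∏ m, updRow A n iN ks v m (i m) k) ^ 2
      = ∑ i ∈ Ω.filter (fun i => ¬ i n = iN),
          (x i - ∑ k, ∏ m, A m (i m) k) ^ 2 :=
    Finset.sum_congr rfl fun i hi => by
      have : ∑ k, ∏ m, updRow A n iN ks v m (i m) k
          = ∑ k, ∏ m, A m (i m) k :=
        Finset.sum_congr rfl fun k _ =>
          prod_upd_offrow A n iN ks v (Finset.mem_filter.mp hi).2 k
      rw [this]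
  rw [h1, h2]
  ring
end Aux

/-- **SALS row-update rule (paper's Theorem 1).**
For λ > 0, the matrix `B + λ I_C` is invertible, and the regularized loss, viewed as a
function of the vector `v` of entries `a^{(n)}_{i_n k_1}, …, a^{(n)}_{i_n k_C}` (all other
entries fixed), attains its unique global minimum at `v* = (B + λ I_C)⁻¹ c`. -/
theorem sals_row_update_rule {N K C : ℕ} (I : Fin N → ℕ) (hI : ∀ m, 1 ≤ I m)
    (Ω : Finset ((m : Fin N) → Fin (I m)))
    (x : ((m : Fin N) → Fin (I m)) → ℝ)
    (A : (m : Fin N) → Fin (I m) → Fin K → ℝ)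
    (lam : ℝ) (hlam : 0 < lam)
    (hC : 1 ≤ C) (hCK : C ≤ K)
    (n : Fin N) (iN : Fin (I n))
    (ks : Fin C → Fin K) (hks : Function.Injective ks) :
    IsUnit (Bmat Ω A n iN ks + lam • (1 : Matrix (Fin C) (Fin C) ℝ)) ∧
      ∀ v : Fin C → ℝ,
        v ≠ (Bmat Ω A n iN ks + lam • 1)⁻¹ *ᵥ cvec Ω x A n iN ks →
        loss I Ω x lam
            (updRow A n iN ks
              ((Bmat Ω A n iN ks + lam • 1)⁻¹ *ᵥ cvec Ω x A n iN ks))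
          < loss I Ω x lam (updRow A n iN ks v) := by
  classical
  set S := Ω.filter (fun i => i n = iN) with hS
  set P : ((m : Fin N) → Fin (I m)) → Fin C → ℝ :=
    fun i c => ∏ l ∈ Finset.univ.erase n, A l (i l) (ks c) with hP
  set s : (Fin C → ℝ) → ((m : Fin N) → Fin (I m)) → ℝ :=
    fun u i => ∑ c, u c * P i c with hs
  set M := Bmat Ω A n iN ks + lam • (1 : Matrix (Fin C) (Fin C) ℝ) with hM
  have hMV : ∀ (u : Fin C → ℝ) (c : Fin C),
      (M *ᵥ u) c = (∑ i ∈ S, P i c * s u i) + lam * u c := by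
    intro u c
    have hB : ∑ c2, Bmat Ω A n iN ks c c2 * u c2 = ∑ i ∈ S, P i c * s u i := by
      simp only [Bmat, Matrix.of_apply, Finset.sum_mul, ← hS, ← hP]
      rw [Finset.sum_comm]
      refine Finset.sum_congr rfl fun i _ => ?_
      simp only [hs, Finset.mul_sum]
      exact Finset.sum_congr rfl fun c2 _ => by ring
    calc (M *ᵥ u) c
        = ∑ c2, (Bmat Ω A n iN ks c c2 + lam * (if c = c2 then 1 else 0)) * u c2 := by
          simp [hM, Matrix.mulVec, dotProduct, Matrix.add_apply,
            Matrix.smul_apply, Matrix.one_apply, smul_eq_mul]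
      _ = (∑ c2, Bmat Ω A n iN ks c c2 * u c2)
            + ∑ c2, lam * (if c = c2 then 1 else 0) * u c2 := by
          rw [← Finset.sum_add_distrib]
          exact Finset.sum_congr rfl fun c2 _ => by ring
      _ = (∑ i ∈ S, P i c * s u i) + lam * u c := by
          rw [hB]
          congr 1
          simp [mul_ite, ite_mul, Finset.sum_ite_eq]
  have hdot : ∀ u : Fin C → ℝ,
      ∑ c, u c * (M *ᵥ u) c = (∑ i ∈ S, (s u i) ^ 2) + lam * ∑ c, u c ^ 2 := by
    intro u
    simp only [hMV, mul_add]
    rw [Finset.sum_add_distrib]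
    congr 1
    · simp only [Finset.mul_sum]
      rw [Finset.sum_comm]
      refine Finset.sum_congr rfl fun i _ => ?_
      have h1 : ∑ c, u c * (P i c * s u i) = (∑ c, u c * P i c) * s u i := by
        rw [Finset.sum_mul]
        exact Finset.sum_congr rfl fun c _ => by ring
      rw [h1, sq]
    · rw [Finset.mul_sum]
      exact Finset.sum_congr rfl fun c _ => by ring
  have hpos2 : ∀ u : Fin C → ℝ, u ≠ 0 → 0 < ∑ c, u c ^ 2 := by
    intro u hu
    obtain ⟨c, hc⟩ := Function.ne_iff.mp hu
    exact lt_of_lt_of_le (pow_two_pos_of_ne_zero hc)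
      (Finset.single_le_sum (fun c _ => sq_nonneg (u c)) (Finset.mem_univ c))
  have hsnn : ∀ u, 0 ≤ ∑ i ∈ S, (s u i) ^ 2 :=
    fun u => Finset.sum_nonneg fun i _ => sq_nonneg _
  have hdet : IsUnit M.det := by
    rw [isUnit_iff_ne_zero]
    intro h0
    obtain ⟨u, hu0, hu⟩ := Matrix.exists_mulVec_eq_zero_iff.mpr h0
    have h1 := hdot u
    rw [hu] at h1
    simp only [Pi.zero_apply, mul_zero, Finset.sum_const_zero] at h1
    nlinarith [hpos2 u hu0, hsnn u, hlam]
  have hunit : IsUnit M := (Matrix.isUnit_iff_isUnit_det M).mpr hdet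
  refine ⟨hunit, ?_⟩
  intro v hv
  set vs := M⁻¹ *ᵥ cvec Ω x A n iN ks with hvs
  have hMvs : M *ᵥ vs = cvec Ω x A n iN ks := by
    rw [hvs, Matrix.mulVec_mulVec, Matrix.mul_nonsing_inv M hdet, Matrix.one_mulVec]
  have hE : ∀ c, (∑ i ∈ S, P i c * s vs i) + lam * vs c = cvec Ω x A n iN ks c := by
    intro c
    rw [← hMV vs c, hMvs]
  rw [loss_upd A n iN ks hks Ω x lam v, loss_upd A n iN ks hks Ω x lam vs, ← hS]
  have hgoal : ∀ u : Fin C → ℝ,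
      (∑ i ∈ S, (rhat x A ks i
        - ∑ c, u c * ∏ l ∈ Finset.univ.erase n, A l (i l) (ks c)) ^ 2)
      = ∑ i ∈ S, (rhat x A ks i - s u i) ^ 2 := fun u => rfl
  rw [hgoal v, hgoal vs]
  set w : Fin C → ℝ := fun c => v c - vs c with hw
  have hw0 : w ≠ 0 := by
    intro h
    apply hv
    funext c
    have h2 := congrFun h c
    simp only [hw, Pi.zero_apply] at h2
    linarith
  have hswi : ∀ i, s w i = s v i - s vs i := by
    intro i
    simp only [hs, hw, sub_mul, Finset.sum_sub_distrib]
  have e1 : ∑ i ∈ S, (rhat x A ks i - s v i) ^ 2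
      = ∑ i ∈ S, (rhat x A ks i - s vs i) ^ 2 + ∑ i ∈ S, (s w i) ^ 2
        - 2 * ∑ i ∈ S, s w i * rhat x A ks i + 2 * ∑ i ∈ S, s w i * s vs i := by
    have hpt : ∀ i ∈ S, (rhat x A ks i - s v i) ^ 2
        = (rhat x A ks i - s vs i) ^ 2 + (s w i) ^ 2
          - 2 * (s w i * rhat x A ks i) + 2 * (s w i * s vs i) := by
      intro i _
      have h3 : s v i = s vs i + s w i := by rw [hswi i]; ring
      rw [h3]; ring
    rw [Finset.sum_congr rfl hpt]
    simp only [Finset.sum_add_distrib, Finset.sum_sub_distrib, ← Finset.mul_sum]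
  have swap : ∀ (f : ((m : Fin N) → Fin (I m)) → ℝ) (g : Fin C → ℝ),
      ∑ i ∈ S, s g i * f i = ∑ c, g c * ∑ i ∈ S, f i * P i c := by
    intro f g
    simp only [hs, Finset.sum_mul, Finset.mul_sum]
    rw [Finset.sum_comm]
    exact Finset.sum_congr rfl fun c _ =>
      Finset.sum_congr rfl fun i _ => by ring
  have hcomm : ∀ c, ∑ i ∈ S, s vs i * P i c = ∑ i ∈ S, P i c * s vs i :=
    fun c => Finset.sum_congr rfl fun i _ => mul_comm _ _
  have e3 : ∑ i ∈ S, s w i * rhat x A ks i = ∑ c, w c * cvec Ω x A n iN ks c := by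
    rw [swap]
    refine Finset.sum_congr rfl fun c _ => ?_
    simp only [cvec, hS, hP]
  have e4 : ∑ i ∈ S, s w i * s vs i = ∑ c, w c * ∑ i ∈ S, P i c * s vs i := by
    rw [swap (fun i => s vs i) w]
    exact Finset.sum_congr rfl fun c _ => by rw [← hcomm c]
  have e5 : ∑ c, w c * cvec Ω x A n iN ks c
      = (∑ c, w c * ∑ i ∈ S, P i c * s vs i) + lam * ∑ c, w c * vs c := by
    have hpt : ∀ c ∈ (Finset.univ : Finset (Fin C)),
        w c * cvec Ω x A n iN ks c
          = w c * (∑ i ∈ S, P i c * s vs i) + lam * (w c * vs c) := by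
      intro c _
      rw [← hE c]
      ring
    rw [Finset.sum_congr rfl hpt, Finset.sum_add_distrib, ← Finset.mul_sum]
  have e6 : lam * ∑ c, v c ^ 2
      = lam * ∑ c, vs c ^ 2 + lam * ∑ c, w c ^ 2 + 2 * (lam * ∑ c, w c * vs c) := by
    have hpt : ∀ c ∈ (Finset.univ : Finset (Fin C)),
        v c ^ 2 = vs c ^ 2 + w c ^ 2 + 2 * (w c * vs c) := by
      intro c _
      simp only [hw]
      ring
    rw [Finset.sum_congr rfl hpt]
    simp only [Finset.sum_add_distrib, ← Finset.mul_sum]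
    ring
  have hpos := mul_pos hlam (hpos2 w hw0)
  have hq := hsnn w
  linarith [e1, e3, e4, e5, e6]
end

section
/- Fix a mode n, a row index i_n, a single column index k ∈ {1,…,K}, and λ > 0. Define r̂_i = x_i − Σ_{k'≠k} Π_{l=1}^N a^{(l)}_{i_l k'} for i ∈ Ω, and set p_i = Π_{l≠n} a^{(l)}_{i_l k}. Then the function mapping a scalar t ∈ ℝ to the value of the regularized loss L obtained by setting a^{(n)}_{i_n k} = t (all other entries of all factor matrices held fixed) attains its unique global minimum at t* = (Σ_{i∈Ω^{(n)}_{i_n}} r̂_i p_i) / (λ + Σ_{i∈Ω^{(n)}_{i_n}} p_i²). (The CDTF single-entry update rule, the C = 1 case of the paper's Theorem 1.) -/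
open Finset

/-- Replace the single entry `a^{(n)}_{i_n k}` by `t`, leaving all other entries of all
factor matrices fixed. -/
noncomputable def updEntry {N K : ℕ} {I : Fin N → ℕ}
    (A : (m : Fin N) → Fin (I m) → Fin K → ℝ)
    (n : Fin N) (iN : Fin (I n)) (k : Fin K) (t : ℝ) :
    (m : Fin N) → Fin (I m) → Fin K → ℝ :=
  fun l j k' =>
    if (⟨l, j⟩ : Σ m, Fin (I m)) = ⟨n, iN⟩ ∧ k' = k then t else A l j k'

/-- `r̂_i = x_i − ∑_{k'≠k} ∏_l a^{(l)}_{i_l k'}`. -/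
noncomputable def rhatOne {N K : ℕ} {I : Fin N → ℕ}
    (x : ((m : Fin N) → Fin (I m)) → ℝ)
    (A : (m : Fin N) → Fin (I m) → Fin K → ℝ)
    (k : Fin K) : ((m : Fin N) → Fin (I m)) → ℝ :=
  fun i => x i - ∑ k' ∈ Finset.univ.erase k, ∏ m : Fin N, A m (i m) k'

/-- `p_i = ∏_{l≠n} a^{(l)}_{i_l k}`. -/
noncomputable def pProd {N K : ℕ} {I : Fin N → ℕ}
    (A : (m : Fin N) → Fin (I m) → Fin K → ℝ)
    (n : Fin N) (k : Fin K) : ((m : Fin N) → Fin (I m)) → ℝ :=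
  fun i => ∏ l ∈ Finset.univ.erase n, A l (i l) k

/-!
Setting `a^{(n)}_{i_n k} = t` changes the residual of an observation `i ∈ Ω^{(n)}_{i_n}` into
`r̂_i - t p_i`, leaves every other residual alone, and changes the penalty by `λ (t² - a²)`.
So the loss is the quadratic `(λ + ∑ p_i²) t² - 2 (∑ r̂_i p_i) t + c` in `t`; for `λ > 0` its
leading coefficient is positive and its vertex is the strict global minimum.
-/

theorem quadratic_vertex_lt {𝕜 : Type*} [Field 𝕜] [LinearOrder 𝕜] [IsStrictOrderedRing 𝕜]
    {a b c t : 𝕜} (ha : 0 < a) (ht : t ≠ b / a) :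
    a * (b / a) ^ 2 - 2 * b * (b / a) + c < a * t ^ 2 - 2 * b * t + c := by
  have hgap : a * t ^ 2 - 2 * b * t - (a * (b / a) ^ 2 - 2 * b * (b / a))
      = a * (t - b / a) ^ 2 := by
    field_simp
    ring
  have : 0 < a * (t - b / a) ^ 2 := mul_pos ha (sq_pos_of_ne_zero (sub_ne_zero.mpr ht))
  linarith

theorem Finset.sum_sub_mul_sq {ι R : Type*} [CommRing R] (s : Finset ι) (r p : ι → R) (t : R) :
    ∑ i ∈ s, (r i - t * p i) ^ 2
      = (∑ i ∈ s, p i ^ 2) * t ^ 2 - 2 * (∑ i ∈ s, r i * p i) * t + ∑ i ∈ s, r i ^ 2 := by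
  rw [sum_mul, mul_sum, sum_mul, ← sum_sub_distrib, ← sum_add_distrib]
  exact sum_congr rfl fun i _ => by ring

theorem Fintype.sum_apply_update {α β M : Type*} [Fintype α] [DecidableEq α] [AddCommGroup M]
    (g : β → M) (f : α → β) (p : α) (b : β) :
    ∑ x, g (Function.update f p b x) = ∑ x, g (f x) + (g b - g (f p)) := by
  have hrest : ∑ x ∈ univ.erase p, g (Function.update f p b x) = ∑ x ∈ univ.erase p, g (f x) :=
    Finset.sum_congr rfl fun x hx => by rw [Function.update_of_ne (ne_of_mem_erase hx)]
  rw [← add_sum_erase univ _ (mem_univ p), ← add_sum_erase univ (fun x => g (f x)) (mem_univ p),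
    Function.update_self, hrest]
  abel

section EntryUpdate

variable {N K : ℕ} {I : Fin N → ℕ}

def entries (A : (m : Fin N) → Fin (I m) → Fin K → ℝ) : (Σ m, Fin (I m)) × Fin K → ℝ :=
  fun e => A e.1.1 e.1.2 e.2

theorem sum_entries (g : (Σ m, Fin (I m)) × Fin K → ℝ) :
    ∑ e, g e = ∑ m : Fin N, ∑ j : Fin (I m), ∑ k : Fin K, g (⟨m, j⟩, k) := by
  rw [Fintype.sum_prod_type, Fintype.sum_sigma]

variable (A : (m : Fin N) → Fin (I m) → Fin K → ℝ) (n : Fin N) (iN : Fin (I n)) (k : Fin K)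
  (t : ℝ)

theorem updEntry_eq_update (l : Fin N) (j : Fin (I l)) (k' : Fin K) :
    updEntry A n iN k t l j k' = Function.update (entries A) (⟨n, iN⟩, k) t (⟨l, j⟩, k') := by
  simp only [updEntry, Function.update_apply, Prod.mk.injEq, entries]

theorem updEntry_of_ne {l : Fin N} {j : Fin (I l)} {k' : Fin K}
    (h : ((⟨l, j⟩ : Σ m, Fin (I m)), k') ≠ (⟨n, iN⟩, k)) :
    updEntry A n iN k t l j k' = A l j k' := by
  rw [updEntry_eq_update, Function.update_of_ne h]
  rfl

theorem sum_sq_updEntry :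
    ∑ m : Fin N, ∑ j : Fin (I m), ∑ k' : Fin K, updEntry A n iN k t m j k' ^ 2
      = ∑ m : Fin N, ∑ j : Fin (I m), ∑ k' : Fin K, A m j k' ^ 2 + (t ^ 2 - A n iN k ^ 2) := by
  simp only [updEntry_eq_update]
  rw [← sum_entries (fun e => Function.update (entries A) (⟨n, iN⟩, k) t e ^ 2),
    Fintype.sum_apply_update (· ^ 2), sum_entries]
  rfl

theorem prod_updEntry_of_eq {i : (m : Fin N) → Fin (I m)} (hi : i n = iN) :
    ∏ m, updEntry A n iN k t m (i m) k = t * pProd A n k i := by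
  rw [← mul_prod_erase _ _ (mem_univ n), pProd]
  congr 1
  · subst hi
    simp [updEntry]
  · refine prod_congr rfl fun m hm => updEntry_of_ne A n iN k t ?_
    exact fun h => ne_of_mem_erase hm (congrArg (·.1.1) h)

theorem prod_updEntry_of_ne {i : (m : Fin N) → Fin (I m)} {k' : Fin K}
    (h : i n ≠ iN ∨ k' ≠ k) :
    ∏ m, updEntry A n iN k t m (i m) k' = ∏ m, A m (i m) k' := by
  refine prod_congr rfl fun m _ => updEntry_of_ne A n iN k t fun he => ?_
  obtain ⟨hm, hk⟩ := Prod.mk.inj he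
  obtain ⟨rfl, hj⟩ := Sigma.mk.inj hm
  exact h.elim (· (eq_of_heq hj)) (· hk)

theorem residual_updEntry_of_eq (x : ((m : Fin N) → Fin (I m)) → ℝ)
    {i : (m : Fin N) → Fin (I m)} (hi : i n = iN) :
    x i - ∑ k', ∏ m, updEntry A n iN k t m (i m) k' = rhatOne x A k i - t * pProd A n k i := by
  rw [← add_sum_erase _ _ (mem_univ k), prod_updEntry_of_eq A n iN k t hi,
    sum_congr rfl fun k' hk' => prod_updEntry_of_ne A n iN k t (.inr (ne_of_mem_erase hk')),
    rhatOne]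
  ring

theorem residual_updEntry_of_ne (x : ((m : Fin N) → Fin (I m)) → ℝ)
    {i : (m : Fin N) → Fin (I m)} (hi : i n ≠ iN) :
    x i - ∑ k', ∏ m, updEntry A n iN k t m (i m) k' = x i - ∑ k', ∏ m, A m (i m) k' := by
  rw [sum_congr rfl fun k' _ => prod_updEntry_of_ne A n iN k t (.inl hi)]

theorem sum_sq_residual_updEntry (Ω : Finset ((m : Fin N) → Fin (I m)))
    (x : ((m : Fin N) → Fin (I m)) → ℝ) :
    ∑ i ∈ Ω, (x i - ∑ k', ∏ m, updEntry A n iN k t m (i m) k') ^ 2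
      = ∑ i ∈ Ω.filter (fun i => i n = iN), (rhatOne x A k i - t * pProd A n k i) ^ 2
        + ∑ i ∈ Ω.filter (fun i => i n ≠ iN), (x i - ∑ k', ∏ m, A m (i m) k') ^ 2 := by
  rw [← sum_filter_add_sum_filter_not Ω (fun i => i n = iN)]
  congr 1 <;> refine sum_congr rfl fun i hi => ?_
  · rw [residual_updEntry_of_eq A n iN k t x (mem_filter.mp hi).2]
  · rw [residual_updEntry_of_ne A n iN k t x (mem_filter.mp hi).2]

theorem loss_updEntry_eq_quadratic (Ω : Finset ((m : Fin N) → Fin (I m)))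
    (x : ((m : Fin N) → Fin (I m)) → ℝ) (lam : ℝ) :
    ∃ c, ∀ t, loss I Ω x lam (updEntry A n iN k t)
      = (lam + ∑ i ∈ Ω.filter (fun i => i n = iN), pProd A n k i ^ 2) * t ^ 2
        - 2 * (∑ i ∈ Ω.filter (fun i => i n = iN), rhatOne x A k i * pProd A n k i) * t + c :=
  ⟨∑ i ∈ Ω.filter (fun i => i n = iN), rhatOne x A k i ^ 2
      + ∑ i ∈ Ω.filter (fun i => i n ≠ iN), (x i - ∑ k', ∏ m, A m (i m) k') ^ 2
      + lam * (∑ m : Fin N, ∑ j : Fin (I m), ∑ k' : Fin K, A m j k' ^ 2 - A n iN k ^ 2),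
    fun t => by
      rw [loss, sum_sq_residual_updEntry, sum_sq_updEntry, sum_sub_mul_sq]
      ring⟩

end EntryUpdate

theorem cdtf_entry_update_rule_general {N K : ℕ} (I : Fin N → ℕ)
    (Ω : Finset ((m : Fin N) → Fin (I m)))
    (x : ((m : Fin N) → Fin (I m)) → ℝ)
    (A : (m : Fin N) → Fin (I m) → Fin K → ℝ)
    (lam : ℝ) (hlam : 0 < lam)
    (n : Fin N) (iN : Fin (I n)) (k : Fin K) :
    ∀ t : ℝ,
      t ≠ (∑ i ∈ Ω.filter (fun i => i n = iN), rhatOne x A k i * pProd A n k i) /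
            (lam + ∑ i ∈ Ω.filter (fun i => i n = iN), pProd A n k i ^ 2) →
      loss I Ω x lam
          (updEntry A n iN k
            ((∑ i ∈ Ω.filter (fun i => i n = iN), rhatOne x A k i * pProd A n k i) /
              (lam + ∑ i ∈ Ω.filter (fun i => i n = iN), pProd A n k i ^ 2)))
        < loss I Ω x lam (updEntry A n iN k t) := by
  intro t ht
  obtain ⟨c, hc⟩ := loss_updEntry_eq_quadratic A n iN k Ω x lam
  have hlead : 0 < lam + ∑ i ∈ Ω.filter (fun i => i n = iN), pProd A n k i ^ 2 :=
    add_pos_of_pos_of_nonneg hlam (sum_nonneg fun i _ => sq_nonneg _)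
  rw [hc, hc]
  exact quadratic_vertex_lt hlead ht

/-- **CDTF single-entry update rule (the C = 1 case of the paper's Theorem 1).**
For λ > 0, the regularized loss, viewed as a function of the single entry
`a^{(n)}_{i_n k}` (all other entries fixed), attains its unique global minimum at
`t* = (∑_{i∈Ω^{(n)}_{i_n}} r̂_i p_i) / (λ + ∑_{i∈Ω^{(n)}_{i_n}} p_i²)`. -/
theorem cdtf_entry_update_rule {N K : ℕ} (I : Fin N → ℕ) (hI : ∀ m, 1 ≤ I m)
    (Ω : Finset ((m : Fin N) → Fin (I m)))
    (x : ((m : Fin N) → Fin (I m)) → ℝ)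
    (A : (m : Fin N) → Fin (I m) → Fin K → ℝ)
    (lam : ℝ) (hlam : 0 < lam)
    (n : Fin N) (iN : Fin (I n)) (k : Fin K) :
    ∀ t : ℝ,
      t ≠ (∑ i ∈ Ω.filter (fun i => i n = iN), rhatOne x A k i * pProd A n k i) /
            (lam + ∑ i ∈ Ω.filter (fun i => i n = iN), pProd A n k i ^ 2) →
      loss I Ω x lam
          (updEntry A n iN k
            ((∑ i ∈ Ω.filter (fun i => i n = iN), rhatOne x A k i * pProd A n k i) /
              (lam + ∑ i ∈ Ω.filter (fun i => i n = iN), pProd A n k i ^ 2)))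
        < loss I Ω x lam (updEntry A n iN k t) :=
  cdtf_entry_update_rule_general I Ω x A lam hlam n iN k
end
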